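/- arXiv:2007.11640 — 3 statements merged into one kernel-verified Lean document; each statement's English description precedes it below -/
import Mathlib

section
/- If B is a finite-dimensional algebra over a field k and J ⊆ B is a two-sided ideal, then every idempotent of B/J lifts to an idempotent of B. -/
/-!
All the lifting happens in the commutative Artinian subalgebra `k[e]`. There, for
`a = e * e - e`, the chain `(a) ⊇ (a²) ⊇ …` stabilises, so some `(aⁿ)` is generated by an
idempotent `g` (Fitting's lemma), and `a` is nilpotent on the complementary piece `(1 - g)`.
On that piece `e * (1 - g)` is idempotent up to a nilpotent and lifts by the usual formula
`x ↦ 1 - (1 - xᵐ)ᵐ`, while `g ∈ (a)` means the result still agrees with `e` modulo `(a) ⊆ J`.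
-/

-- makes `Algebra.adjoin k {e}` a commutative ring
open scoped IsMulCommutative

namespace IsArtinianRing

variable {A : Type*} [CommRing A] [IsArtinianRing A]

theorem exists_isIdempotentElem_mem_span_isNilpotent_mul_one_sub (a : A) :
    ∃ g : A, IsIdempotentElem g ∧ g ∈ Ideal.span {a} ∧ IsNilpotent (a * (1 - g)) := by
  obtain ⟨n, c, hc⟩ := IsArtinian.exists_pow_succ_smul_dvd a (1 : A)
  simp only [smul_eq_mul, mul_one, pow_succ] at hc
  have stable : ∀ j, a ^ n * (a * c) ^ j = a ^ n := by
    intro j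
    induction j with
    | zero => simp
    | succ j ih => linear_combination (a * c) ^ j * hc + ih
  refine ⟨(a * c) ^ (n + 1), ?_, ?_, n + 1, ?_⟩
  · rw [IsIdempotentElem]
    linear_combination c ^ (n + 1) * a * stable (n + 1)
  · exact Ideal.mem_span_singleton.mpr ⟨c * (a * c) ^ n, by ring⟩
  · have h : a ^ n * (1 - (a * c) ^ (n + 1)) = 0 := by linear_combination -stable (n + 1)
    generalize (a * c) ^ (n + 1) = g at h ⊢
    rw [mul_pow, pow_succ _ n]
    linear_combination a * (1 - g) ^ n * h

theorem exists_isIdempotentElem_sub_mem_span (e : A) :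
    ∃ f : A, IsIdempotentElem f ∧ f - e ∈ Ideal.span {e * e - e} := by
  obtain ⟨g, hg, hg_mem, n, hn⟩ :=
    exists_isIdempotentElem_mem_span_isNilpotent_mul_one_sub (e * e - e)
  have hx : (e * (1 - g) - (e * (1 - g)) ^ 2) ^ (n + 1) = 0 := by
    have : e * (1 - g) - (e * (1 - g)) ^ 2 = -((e * e - e) * (1 - g)) := by
      linear_combination -e ^ 2 * hg.one_sub.eq
    rw [this, neg_pow, pow_succ ((e * e - e) * (1 - g)) n, hn, zero_mul, mul_zero]
  refine ⟨_, isIdempotentElem_one_sub_one_sub_pow_pow _ _ hx, ?_⟩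
  rw [← Ideal.Quotient.eq]
  have he : IsIdempotentElem (Ideal.Quotient.mk (Ideal.span {e * e - e}) e) := by
    rw [IsIdempotentElem, ← map_mul, ← sub_eq_zero, ← map_sub, Ideal.Quotient.eq_zero_iff_mem]
    exact Ideal.mem_span_singleton_self _
  have hg0 : Ideal.Quotient.mk (Ideal.span {e * e - e}) g = 0 :=
    Ideal.Quotient.eq_zero_iff_mem.mpr hg_mem
  simp only [map_sub, map_one, map_pow, map_mul, hg0, sub_zero, mul_one, he.pow_succ_eq,
    he.one_sub.pow_succ_eq, sub_sub_cancel]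

end IsArtinianRing

/-- In a finite-dimensional algebra B over a field k, every idempotent
of B/J (for J a two-sided ideal) lifts to an idempotent of B. -/
theorem idempotent_lifts
    (k : Type*) [Field k] (B : Type*) [Ring B] [Algebra k B]
    [FiniteDimensional k B] (J : TwoSidedIdeal B)
    (e : B) (he : e * e - e ∈ J) :
    ∃ f : B, f * f = f ∧ f - e ∈ J := by
  let S := Algebra.adjoin k {e}
  have : IsArtinianRing S := isArtinian_of_tower k inferInstance
  let x : S := ⟨e, Algebra.self_mem_adjoin_singleton k e⟩
  obtain ⟨f, hf, hfx⟩ := IsArtinianRing.exists_isIdempotentElem_sub_mem_span x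
  obtain ⟨t, ht⟩ := Ideal.mem_span_singleton'.mp hfx
  refine ⟨f, congrArg Subtype.val hf.eq, ?_⟩
  have : (f : B) - e = t * (e * e - e) := congrArg Subtype.val ht.symm
  rw [this]
  exact J.mul_mem_left _ _ he
end

section
/- If the generating function of (αₙ) over a field k is rational with denominator of degree M, then the span of all shifts of the sequence α in k^ℕ is finite-dimensional of dimension at most max(deg P + 1, M). -/
/-! Past the degrees of `P` and `Q`, the identity `Q * Σ αₙ Tⁿ = P` says that the coefficients of
`Q` give a linear recurrence of order `deg Q` for `α` whose coefficient `Q(0)` of `αₙ` is nonzero.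
Applied to all shifts at once, every shift beyond `max (deg P + 1) (deg Q)` is a combination of
earlier ones, so the first `max (deg P + 1) (deg Q)` shifts span. -/

open PowerSeries

def shiftSeq {k : Type*} (α : ℕ → k) (m : ℕ) : ℕ → k := fun n => α (m + n)

open Polynomial Submodule

theorem Submodule.span_range_le_span_image_Iio {R M : Type*} [Semiring R] [AddCommMonoid M]
    [Module R M] {f : ℕ → M} {N : ℕ} (h : ∀ m, N ≤ m → f m ∈ span R (f '' Set.Iio m)) :
    span R (Set.range f) ≤ span R (f '' Set.Iio N) := by
  rw [span_le]
  rintro _ ⟨m, rfl⟩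
  induction m using Nat.strong_induction_on with
  | _ m ih =>
    rcases lt_or_ge m N with hm | hm
    · exact subset_span ⟨m, hm, rfl⟩
    · refine span_le.2 ?_ (h m hm)
      rintro _ ⟨i, hi, rfl⟩
      exact ih i hi

theorem Submodule.mem_span_image_erase_of_sum_smul_eq_zero {ι K V : Type*} [DecidableEq ι]
    [Field K] [AddCommGroup V] [Module K V] {s : Finset ι} {c : ι → K} {v : ι → V} {j : ι}
    (hj : j ∈ s) (hc : c j ≠ 0) (h : ∑ i ∈ s, c i • v i = 0) :
    v j ∈ span K (v '' ↑(s.erase j)) := by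
  have hvj : c j • v j = -∑ i ∈ s.erase j, c i • v i :=
    eq_neg_of_add_eq_zero_left (by rwa [Finset.add_sum_erase s (fun i => c i • v i) hj])
  rw [← smul_mem_iff _ hc, hvj]
  exact neg_mem (sum_mem fun i hi => smul_mem _ _ (subset_span ⟨i, hi, rfl⟩))

theorem Polynomial.sum_coeff_mul_eq_coeff_coe_mul {R : Type*} [CommSemiring R] (Q : R[X])
    (α : ℕ → R) {n : ℕ} (hn : Q.natDegree ≤ n) :
    ∑ i ∈ Finset.range (Q.natDegree + 1), Q.coeff i * α (n - i) =
      PowerSeries.coeff n ((Q : PowerSeries R) * PowerSeries.mk α) := by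
  rw [PowerSeries.coeff_mul, Finset.Nat.sum_antidiagonal_eq_sum_range_succ_mk]
  simp only [Polynomial.coeff_coe, PowerSeries.coeff_mk]
  refine Finset.sum_subset (Finset.range_subset_range.2 (by omega)) fun i _ hi => ?_
  rw [coeff_eq_zero_of_natDegree_lt (by simpa using hi), zero_mul]

theorem sum_coeff_smul_shiftSeq_eq_zero {R : Type*} [CommSemiring R] {α : ℕ → R} {P Q : R[X]}
    (hser : (Q : PowerSeries R) * PowerSeries.mk α = P) {m : ℕ} (hQm : Q.natDegree ≤ m)
    (hPm : P.natDegree < m) :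
    ∑ i ∈ Finset.range (Q.natDegree + 1), Q.coeff i • shiftSeq α (m - i) = 0 := by
  funext n
  have hsum := Q.sum_coeff_mul_eq_coeff_coe_mul α (n := m + n) (by omega)
  rw [hser, Polynomial.coeff_coe, coeff_eq_zero_of_natDegree_lt (by omega)] at hsum
  rw [Pi.zero_apply, ← hsum, Finset.sum_apply]
  refine Finset.sum_congr rfl fun i hi => ?_
  have him : i ≤ m := by rw [Finset.mem_range] at hi; omega
  simp only [Pi.smul_apply, smul_eq_mul, shiftSeq, Nat.sub_add_comm him]

theorem shiftSeq_mem_span_image_Iio {k : Type*} [Field k] {α : ℕ → k} {P Q : k[X]}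
    (hser : (Q : PowerSeries k) * PowerSeries.mk α = P) (hQ0 : Q.coeff 0 ≠ 0) {m : ℕ}
    (hm : max (P.natDegree + 1) Q.natDegree ≤ m) :
    shiftSeq α m ∈ span k (shiftSeq α '' Set.Iio m) := by
  classical
  have hPm : P.natDegree < m := le_of_max_le_left hm
  have hQm : Q.natDegree ≤ m := le_of_max_le_right hm
  have hrel := sum_coeff_smul_shiftSeq_eq_zero hser hQm hPm
  have hmem := mem_span_image_erase_of_sum_smul_eq_zero (by simp) hQ0 hrel
  refine span_mono ?_ hmem
  rintro _ ⟨i, hi, rfl⟩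
  simp only [Finset.coe_erase, Finset.coe_range, Set.mem_sdiff, Set.mem_Iio,
    Set.mem_singleton_iff] at hi
  exact ⟨m - i, Set.mem_Iio.2 (by omega), rfl⟩

theorem span_of_shifts_finite_dimensional_general
    (k : Type*) [Field k] (α : ℕ → k) (P Q : Polynomial k) (M : ℕ)
    (hQ0 : Polynomial.eval 0 Q ≠ 0) (hM : Q.natDegree = M)
    (hser : (Q : PowerSeries k) * PowerSeries.mk α = (P : PowerSeries k)) :
    FiniteDimensional k
        (Submodule.span k (Set.range (shiftSeq α)) : Submodule k (ℕ → k)) ∧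
      Module.finrank k
        (Submodule.span k (Set.range (shiftSeq α)) : Submodule k (ℕ → k)) ≤
          max (P.natDegree + 1) M := by
  classical
  set S := (Finset.range (max (P.natDegree + 1) M)).image (shiftSeq α)
  have hle : span k (Set.range (shiftSeq α)) ≤ span k (S : Set (ℕ → k)) := by
    rw [Finset.coe_image, Finset.coe_range]
    refine span_range_le_span_image_Iio fun m hm => shiftSeq_mem_span_image_Iio hser ?_ (hM ▸ hm)
    rwa [coeff_zero_eq_eval_zero]
  refine ⟨finiteDimensional_of_le hle, (finrank_mono hle).trans ?_⟩
  calc Module.finrank k (span k (S : Set (ℕ → k))) ≤ S.card := finrank_span_finset_le_card S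
    _ ≤ max (P.natDegree + 1) M := Finset.card_image_le.trans (Finset.card_range _).le

/-- if the generating function of α is rational P/Q with P,Q coprime,
Q(0) ≠ 0 and deg Q = M, then the span of all shifts of α is finite-dimensional of
dimension at most max(deg P + 1, M). -/
theorem span_of_shifts_finite_dimensional
    (k : Type*) [Field k] (α : ℕ → k) (P Q : Polynomial k) (M : ℕ)
    (hcop : IsCoprime P Q) (hQ0 : Polynomial.eval 0 Q ≠ 0) (hM : Q.natDegree = M)
    (hser : (Q : PowerSeries k) * PowerSeries.mk α = (P : PowerSeries k)) :
    FiniteDimensional k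
        (Submodule.span k (Set.range (shiftSeq α)) : Submodule k (ℕ → k)) ∧
      Module.finrank k
        (Submodule.span k (Set.range (shiftSeq α)) : Submodule k (ℕ → k)) ≤
          max (P.natDegree + 1) M :=
  span_of_shifts_finite_dimensional_general k α P Q M hQ0 hM hser
end

section
/- Conversely, if the span of all shifts of a sequence (αₙ) in k^ℕ is finite-dimensional, then the generating function Σ αₙ Tⁿ is rational, i.e., there exists a nonzero polynomial Q with Q(T)·Σ αₙTⁿ a polynomial. -/
/-!
A finite-dimensional span cannot contain the infinitely many shifts of `α` as an independent
family, so some nontrivial relation `∑ gᵢ • shiftᵢ α = 0` with `i ≤ N` holds. Since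
`mk α = trunc i (mk α) + Xⁱ · mk (shiftᵢ α)`, multiplying by `Q = ∑ gᵢ X^(N-i)` gives
`Q · mk α = ∑ gᵢ X^(N-i) trunc i (mk α) + X^N · mk (∑ gᵢ • shiftᵢ α)`, a polynomial.
-/

open PowerSeries

theorem not_linearIndependent_of_finite_span {R M ι : Type*} [Ring R] [StrongRankCondition R]
    [AddCommGroup M] [Module R M] [Infinite ι] {v : ι → M}
    [Module.Finite R (Submodule.span R (Set.range v))] : ¬ LinearIndependent R v :=
  fun hv => Module.Finite.not_linearIndependent_of_infinite _ (linearIndependent_span hv)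

theorem Polynomial.sum_C_mul_X_pow_sub_ne_zero {R : Type*} [Semiring R] {s : Finset ℕ}
    {g : ℕ → R} {N i₀ : ℕ} (hN : ∀ i ∈ s, i ≤ N) (hi₀ : i₀ ∈ s) (hg : g i₀ ≠ 0) :
    ∑ i ∈ s, Polynomial.C (g i) * Polynomial.X ^ (N - i) ≠ 0 := by
  refine ne_of_apply_ne (Polynomial.coeff · (N - i₀)) ?_
  rw [Polynomial.finsetSum_coeff, Polynomial.coeff_zero, Finset.sum_eq_single_of_mem i₀ hi₀]
  · simpa using hg
  · intro i hi hne
    have := hN i hi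
    have := hN i₀ hi₀
    rw [Polynomial.coeff_C_mul_X_pow, if_neg (by omega)]

namespace PowerSeries

variable {R : Type*}

theorem trunc_add_X_pow_mul_mk_shiftSeq [Semiring R] (α : ℕ → R) (i : ℕ) :
    (trunc i (mk α) : R⟦X⟧) + X ^ i * mk (shiftSeq α i) = mk α := by
  ext m
  rw [map_add, Polynomial.coeff_coe, coeff_trunc, coeff_X_pow_mul', coeff_mk, coeff_mk]
  by_cases hm : m < i
  · simp [hm, not_le.mpr hm]
  · simp [hm, shiftSeq, Nat.add_sub_cancel' (not_lt.mp hm)]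

theorem mk_sum_smul [Semiring R] {ι : Type*} (s : Finset ι) (g : ι → R) (f : ι → ℕ → R) :
    mk (∑ i ∈ s, g i • f i) = ∑ i ∈ s, C (g i) * mk (f i) := by
  ext n
  simp [map_sum, Finset.sum_apply]

theorem exists_mul_mk_eq_coe_of_sum_smul_shiftSeq_eq_zero [CommSemiring R] {α : ℕ → R}
    {s : Finset ℕ} {g : ℕ → R} {N : ℕ} (hrel : ∑ i ∈ s, g i • shiftSeq α i = 0)
    (hN : ∀ i ∈ s, i ≤ N) :
    ∃ P : Polynomial R,
      ((∑ i ∈ s, Polynomial.C (g i) * Polynomial.X ^ (N - i) : Polynomial R) : R⟦X⟧) * mk α =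
        P := by
  refine ⟨∑ i ∈ s, Polynomial.C (g i) * Polynomial.X ^ (N - i) * trunc i (mk α), ?_⟩
  have hsplit : ∀ i ∈ s, C (g i) * X ^ (N - i) * mk α =
      C (g i) * X ^ (N - i) * (trunc i (mk α) : R⟦X⟧) + X ^ N * (C (g i) * mk (shiftSeq α i)) := by
    intro i hi
    conv_lhs => rw [← trunc_add_X_pow_mul_mk_shiftSeq α i]
    rw [← pow_sub_mul_pow X (hN i hi)]
    ring
  rw [← Polynomial.coeToPowerSeries.ringHom_apply, ← Polynomial.coeToPowerSeries.ringHom_apply]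
  simp only [map_sum, map_mul, map_pow, Polynomial.coeToPowerSeries.ringHom_apply,
    Polynomial.coe_C, Polynomial.coe_X]
  rw [Finset.sum_mul, Finset.sum_congr rfl hsplit, Finset.sum_add_distrib, ← Finset.mul_sum,
    ← mk_sum_smul, hrel, show mk (0 : ℕ → R) = 0 from rfl, mul_zero, add_zero]

end PowerSeries

/-- if the span of all shifts of α in k^ℕ is finite-dimensional, then
the generating function Σ αₙTⁿ is rational: some nonzero polynomial Q multiplies it
into a polynomial. -/
theorem rational_of_span_of_shifts_finite_dimensional
    (k : Type*) [Field k] (α : ℕ → k)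
    (hfin : FiniteDimensional k
      (Submodule.span k (Set.range (shiftSeq α)) : Submodule k (ℕ → k))) :
    ∃ Q : Polynomial k, Q ≠ 0 ∧
      ∃ P : Polynomial k,
        (Q : PowerSeries k) * PowerSeries.mk α = (P : PowerSeries k) := by
  obtain ⟨s, g, hrel, i₀, hi₀, hg⟩ := not_linearIndependent_iff.mp
    (not_linearIndependent_of_finite_span (R := k) (v := shiftSeq α))
  have hN : ∀ i ∈ s, i ≤ s.sup id := fun i hi => Finset.le_sup (f := id) hi
  exact ⟨_, Polynomial.sum_C_mul_X_pow_sub_ne_zero hN hi₀ hg,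
    exists_mul_mk_eq_coe_of_sum_smul_shiftSeq_eq_zero hrel hN⟩
end
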